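/- Let ψ(z) = z - 1/z on ℂ \ {0}, let λ_n be as above and ρ_{n,N} = λ_n - λ_{n-N}. For N ≥ 1, 0 < c ≤ 1 and n > N, if |z - λ_n| < c ρ_{n,N} then z ≠ 0 and |ψ(z) - λ_{n-1}| < c ρ_{n-1,N}. -/

import Mathlib

/-!
With `ψ z = z - 1/z`, the recursion gives `ψ (λ (k+1)) = λ k`, so `λ (n-1) = ψ (λ n)` and
`λ (n-1-N) = ψ (λ (n-N))`. The factorization `ψ x - ψ y = (x - y) (1 + 1/(x y))` then reduces
the claim to `|1 + 1/(λ n z)| ≤ 1 + 1/(λ n λ (n-N))`, which holds because the disc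
`|z - λ n| < c ρ_{n,N}` stays outside the closed disc of radius `λ (n-N)` about `0`.
-/

noncomputable def lam : ℕ → ℝ
  | 0 => 0
  | n + 1 => (lam n + Real.sqrt (lam n ^ 2 + 4)) / 2

lemma sub_one_div_sub_sub_one_div {K : Type*} [Field K] {x y : K} (hx : x ≠ 0) (hy : y ≠ 0) :
    x - 1 / x - (y - 1 / y) = (x - y) * (1 + 1 / (x * y)) := by
  field_simp
  ring

lemma norm_sub_one_div_sub_lt {a L c : ℝ} (hL : 0 < L) (hLa : L ≤ a) (hc : c ≤ 1) {z : ℂ}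
    (hz : ‖z - a‖ < c * (a - L)) :
    z ≠ 0 ∧ ‖z - 1 / z - ((a - 1 / a : ℝ) : ℂ)‖ < c * (a - 1 / a - (L - 1 / L)) := by
  have ha : 0 < a := hL.trans_le hLa
  have hcaL : c * (a - L) ≤ a - L := mul_le_of_le_one_left (sub_nonneg.2 hLa) hc
  have hLz : L < ‖z‖ := by
    have h := norm_sub_norm_le (a : ℂ) z
    rw [Complex.norm_of_nonneg ha.le, norm_sub_rev] at h
    linarith
  have hz0 : z ≠ 0 := norm_pos_iff.1 (hL.trans hLz)
  refine ⟨hz0, ?_⟩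
  have hfactor : ‖1 + 1 / (z * a)‖ ≤ 1 + 1 / (a * L) :=
    calc ‖1 + 1 / (z * a)‖ ≤ ‖(1 : ℂ)‖ + ‖1 / (z * a)‖ := norm_add_le _ _
      _ = 1 + 1 / (a * ‖z‖) := by
        rw [norm_one, norm_div, norm_one, norm_mul, Complex.norm_of_nonneg ha.le, mul_comm]
      _ ≤ 1 + 1 / (a * L) := by gcongr
  push_cast
  rw [sub_one_div_sub_sub_one_div hz0 (by exact_mod_cast ha.ne'), norm_mul,
    sub_one_div_sub_sub_one_div ha.ne' hL.ne', ← mul_assoc]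
  calc ‖z - a‖ * ‖1 + 1 / (z * a)‖ ≤ ‖z - a‖ * (1 + 1 / (a * L)) := by gcongr
    _ < c * (a - L) * (1 + 1 / (a * L)) := by gcongr

lemma lam_nonneg (n : ℕ) : 0 ≤ lam n := by
  induction n with
  | zero => simp [lam]
  | succ k ih =>
    rw [lam]
    positivity

lemma lam_succ_pos (n : ℕ) : 0 < lam (n + 1) := by
  rw [lam]
  have := lam_nonneg n
  positivity

lemma lam_succ_sub_one_div (n : ℕ) : lam (n + 1) - 1 / lam (n + 1) = lam n := by
  have hsq : Real.sqrt (lam n ^ 2 + 4) ^ 2 = lam n ^ 2 + 4 := Real.sq_sqrt (by positivity)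
  have hpos := lam_succ_pos n
  rw [sub_eq_iff_eq_add, ← sub_eq_iff_eq_add', eq_div_iff hpos.ne']
  rw [lam] at hpos ⊢
  linear_combination (1 / 4 : ℝ) * hsq

lemma lam_monotone : Monotone lam :=
  monotone_nat_of_le_succ fun n => by
    have h := lam_succ_sub_one_div n
    have := lam_succ_pos n
    have : 0 < 1 / lam (n + 1) := by positivity
    linarith

theorem stmt_12_general (N n : ℕ) (hn : N < n) (c : ℝ) (hc1 : c ≤ 1)
    (z : ℂ) (hz : ‖z - lam n‖ < c * (lam n - lam (n - N))) :
    z ≠ 0 ∧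
      ‖(z - 1 / z) - lam (n - 1)‖ < c * (lam (n - 1) - lam (n - 1 - N)) := by
  obtain ⟨k, hk⟩ : ∃ k, n - N = k + 1 := ⟨n - N - 1, by omega⟩
  obtain ⟨m, rfl⟩ : ∃ m, n = m + 1 := ⟨n - 1, by omega⟩
  rw [hk] at hz
  rw [show m + 1 - 1 - N = k by omega, Nat.add_sub_cancel, ← lam_succ_sub_one_div m,
    ← lam_succ_sub_one_div k]
  exact norm_sub_one_div_sub_lt (lam_succ_pos k) (lam_monotone (by omega)) hc1 hz

theorem stmt_12 (N n : ℕ) (hN : 1 ≤ N) (hn : N < n) (c : ℝ) (hc0 : 0 < c) (hc1 : c ≤ 1)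
    (z : ℂ) (hz : ‖z - lam n‖ < c * (lam n - lam (n - N))) :
    z ≠ 0 ∧
      ‖(z - 1 / z) - lam (n - 1)‖ < c * (lam (n - 1) - lam (n - 1 - N)) :=
  stmt_12_general N n hn c hc1 z hz
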